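/- Under Assumptions 1–5 in the implicit specialization with K = 1 (Q₁ not the identity), there exist a constant L ≥ max(p, r) and constants C > 0, c > 0 such that for every integer n ≥ 1 and every j ∈ ℤ with |j| > n L, the temporal Green's function satisfies |𝒢ⁿ_j| ≤ C exp(−c |j|). -/

import Mathlib

open scoped Classical
open Complex Filter Asymptotics Metric

noncomputable section

set_option autoImplicit false

/-- the space `ℓ²(ℤ;ℂ)` -/
abbrev Seq2 : Type := lp (fun _ : ℤ => ℂ) 2

/-- the action of the convolution operator with coefficients `a` supported in `{-r, …, p}`:
`(Q u)_j = ∑_{ℓ=-r}^p a_ℓ u_{j+ℓ}`. -/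
def convAct (r p : ℕ) (a : ℤ → ℂ) (u : ℤ → ℂ) (j : ℤ) : ℂ :=
  ∑ ℓ ∈ Finset.Icc (-(r : ℤ)) (p : ℤ), a ℓ * u (j + ℓ)

/-- the symbol `Q̂(κ) = ∑_{ℓ=-r}^p a_ℓ κ^ℓ`. -/
def symbol (r p : ℕ) (a : ℤ → ℂ) (κ : ℂ) : ℂ :=
  ∑ ℓ ∈ Finset.Icc (-(r : ℤ)) (p : ℤ), a ℓ * κ ^ ℓ

/-- the symbol `F = Q̂₀ / Q̂₁` of the operator `ℒ = Q₁⁻¹ Q₀`. -/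
def Fsym (r p : ℕ) (a0 a1 : ℤ → ℂ) (κ : ℂ) : ℂ :=
  symbol r p a0 κ / symbol r p a1 κ

/-- `𝔸_ℓ(z) = z a_{ℓ,1} - a_{ℓ,0}`. -/
def Acoef (a0 a1 : ℤ → ℂ) (ℓ : ℤ) (z : ℂ) : ℂ := z * a1 ℓ - a0 ℓ

/-- the companion-type matrix `𝕄(z) ∈ M_{p+r}(ℂ)`: first row
`(-𝔸_{p-1}(z)/𝔸_p(z), …, -𝔸_{-r}(z)/𝔸_p(z))`, ones on the subdiagonal, zeros elsewhere. -/
def Mmat (r p : ℕ) (a0 a1 : ℤ → ℂ) (z : ℂ) : Matrix (Fin (p + r)) (Fin (p + r)) ℂ :=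
  fun i j =>
    if (i : ℕ) = 0 then - Acoef a0 a1 ((p : ℤ) - 1 - (j : ℕ)) z / Acoef a0 a1 (p : ℤ) z
    else if (i : ℕ) = (j : ℕ) + 1 then 1 else 0

/-- the discrete Dirac mass `δ ∈ ℓ²(ℤ;ℂ)`. -/
def dirac : Seq2 := lp.single 2 (0 : ℤ) (1 : ℂ)

/-!
Since `Q₁` and `Q₀` commute, applying `Q₁ⁿ` to `𝒢ⁿ = ℒⁿ δ` gives `Q₁ⁿ 𝒢ⁿ = Q₀ⁿ δ`, which is
supported in `[-np, nr]`. Beyond `nr` the bounded sequence `𝒢ⁿ` (of size at most `‖ℒ‖ⁿ`) thus solves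
the linear recurrence with characteristic polynomial `(X ^ r Q̂₁) ^ n`, which has no root on the
unit circle. Splitting it into factors `X - z`, a bounded solution of `w (k+1) - z w k = O(ρ ^ k)`
is itself `O(ρ ^ k)`: solve forwards when `|z| < ρ` and backwards when `|z| > 1`. Peeling off the
`n · #roots` factors one at a time costs a factor `Bⁿ`, and reflecting `j ↦ -j` handles `j < -np`.
Hence `|𝒢ⁿ_j| ≤ ρ⁻¹ (B ‖ℒ‖)ⁿ ρ ^ |j|`, and for `|j| > n L` with `L` large the decay `ρ ^ |j|`
absorbs the growth `(B ‖ℒ‖)ⁿ`.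
-/

section Recurrence

variable {𝕜 E : Type*} [NormedField 𝕜] [NormedAddCommGroup E] [NormedSpace 𝕜 E]

theorem norm_le_of_norm_sub_smul_le_of_norm_lt {z : 𝕜} {w : ℕ → E} {ρ M D : ℝ}
    (hz : ‖z‖ < ρ) (hw : ‖w 0‖ ≤ M) (hrec : ∀ k, ‖w (k + 1) - z • w k‖ ≤ D * ρ ^ k) (k : ℕ) :
    ‖w k‖ ≤ (M + D / (ρ - ‖z‖)) * ρ ^ k := by
  have hgap : 0 < ρ - ‖z‖ := sub_pos.2 hz
  have hM : 0 ≤ M := (norm_nonneg _).trans hw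
  induction k with
  | zero => simpa using hw.trans (le_add_of_nonneg_right
      (div_nonneg ((norm_nonneg _).trans (by simpa using hrec 0)) hgap.le))
  | succ k ih =>
    have hstep : ‖w (k + 1)‖ ≤ ‖z‖ * ‖w k‖ + D * ρ ^ k := by
      calc ‖w (k + 1)‖ ≤ ‖z • w k‖ + ‖w (k + 1) - z • w k‖ := norm_le_norm_add_norm_sub' _ _
        _ ≤ ‖z‖ * ‖w k‖ + D * ρ ^ k := by rw [norm_smul]; gcongr; exact hrec k
    -- the constant `D / (ρ - ‖z‖)` is the fixed point of `C ↦ (‖z‖ C + D) / ρ`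
    have hfix : ‖z‖ * (D / (ρ - ‖z‖)) + D = D / (ρ - ‖z‖) * ρ := by
      field_simp; ring
    calc ‖w (k + 1)‖ ≤ ‖z‖ * ((M + D / (ρ - ‖z‖)) * ρ ^ k) + D * ρ ^ k :=
          hstep.trans (by gcongr)
      _ = (‖z‖ * M + D / (ρ - ‖z‖) * ρ) * ρ ^ k := by rw [← hfix]; ring
      _ ≤ (M + D / (ρ - ‖z‖)) * ρ ^ (k + 1) := by
          have : ‖z‖ * M ≤ ρ * M := by gcongr
          rw [pow_succ]; nlinarith [pow_nonneg ((norm_nonneg z).trans hz.le) k]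

theorem norm_le_of_norm_sub_smul_le_of_one_lt_norm {z : 𝕜} {w : ℕ → E} {ρ M D : ℝ}
    (hρ : 0 ≤ ρ) (hz : 1 < ‖z‖) (hzρ : ρ < ‖z‖) (hw : ∀ k, ‖w k‖ ≤ M)
    (hrec : ∀ k, ‖w (k + 1) - z • w k‖ ≤ D * ρ ^ k) (k : ℕ) :
    ‖w k‖ ≤ D / (‖z‖ - ρ) * ρ ^ k := by
  have hgap : 0 < ‖z‖ - ρ := sub_pos.2 hzρ
  have hD : 0 ≤ D := (norm_nonneg _).trans (by simpa using hrec 0)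
  set C := D / (‖z‖ - ρ)
  have hfix : C * ρ + D = ‖z‖ * C := by
    simp only [C]; field_simp; ring
  -- solving the recurrence backwards: the error term `M ‖z‖⁻ᴺ` disappears as `N → ∞`
  have hN : ∀ N k, ‖w k‖ ≤ M * ‖z‖⁻¹ ^ N + C * ρ ^ k := by
    intro N
    induction N with
    | zero => intro k; simpa using (hw k).trans (le_add_of_nonneg_right (by positivity))
    | succ N ih =>
      intro k
      refine le_of_mul_le_mul_left ?_ (zero_lt_one.trans hz)
      calc ‖z‖ * ‖w k‖ = ‖z • w k‖ := (norm_smul _ _).symm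
        _ ≤ ‖w (k + 1)‖ + ‖w (k + 1) - z • w k‖ := norm_le_norm_add_norm_sub _ _
        _ ≤ M * ‖z‖⁻¹ ^ N + C * ρ ^ (k + 1) + D * ρ ^ k := add_le_add (ih _) (hrec k)
        _ = ‖z‖ * (M * ‖z‖⁻¹ ^ (N + 1) + C * ρ ^ k) := by
            have hinv : ‖z‖ * ‖z‖⁻¹ = 1 := mul_inv_cancel₀ (by positivity)
            rw [pow_succ, pow_succ]
            linear_combination ρ ^ k * hfix - M * ‖z‖⁻¹ ^ N * hinv
  have hlim : Tendsto (fun N : ℕ => M * ‖z‖⁻¹ ^ N + C * ρ ^ k) atTop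
      (nhds (M * 0 + C * ρ ^ k)) :=
    ((tendsto_pow_atTop_nhds_zero_of_lt_one (by positivity) (inv_lt_one_of_one_lt₀ hz)).const_mul
      M).add_const _
  simpa using ge_of_tendsto' hlim fun N => hN N k

theorem norm_le_of_norm_sub_smul_le {z : 𝕜} {w : ℕ → E} {ρ M D : ℝ}
    (hρ0 : 0 ≤ ρ) (hρ1 : ρ < 1) (hz : ‖z‖ < ρ ∨ 1 < ‖z‖) (hw : ∀ k, ‖w k‖ ≤ M)
    (hrec : ∀ k, ‖w (k + 1) - z • w k‖ ≤ D * ρ ^ k) (k : ℕ) :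
    ‖w k‖ ≤ (M + D / |‖z‖ - ρ|) * ρ ^ k := by
  rcases hz with hz | hz
  · rw [abs_sub_comm, abs_of_pos (sub_pos.2 hz)]
    exact norm_le_of_norm_sub_smul_le_of_norm_lt hz (hw 0) hrec k
  · have hzρ : ρ < ‖z‖ := hρ1.trans hz
    rw [abs_of_pos (sub_pos.2 hzρ)]
    have hM : 0 ≤ M := (norm_nonneg _).trans (hw 0)
    calc ‖w k‖ ≤ D / (‖z‖ - ρ) * ρ ^ k :=
          norm_le_of_norm_sub_smul_le_of_one_lt_norm hρ0 hz hzρ hw hrec k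
      _ ≤ (M + D / (‖z‖ - ρ)) * ρ ^ k := by gcongr; linarith

end Recurrence

section Shift

open Polynomial

variable (R M : Type*) [CommRing R] [AddCommGroup M] [Module R M]

def seqShift : Module.End R (ℕ → M) := LinearMap.funLeft R M Nat.succ

variable {R M}

theorem seqShift_pow_apply (t : ℕ) (v : ℕ → M) (k : ℕ) : (seqShift R M ^ t) v k = v (k + t) := by
  induction t generalizing v with
  | zero => rfl
  | succ t ih =>
    rw [pow_succ, Module.End.mul_apply, ih, seqShift, LinearMap.funLeft_apply, Nat.succ_eq_add_one,
      add_assoc]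

theorem aeval_seqShift_X_sub_C_apply (z : R) (v : ℕ → M) (k : ℕ) :
    aeval (seqShift R M) (X - C z) v k = v (k + 1) - z • v k := by
  simp [seqShift, Module.algebraMap_end_apply]

end Shift

section Factorization

open Polynomial

variable {𝕜 E : Type*} [NormedField 𝕜] [NormedAddCommGroup E] [NormedSpace 𝕜 E]

theorem norm_le_of_aeval_seqShift_prod_le {ρ K : ℝ} (hρ0 : 0 ≤ ρ) (hρ1 : ρ < 1) (s : Multiset 𝕜)
    (hs : ∀ z ∈ s, (‖z‖ < ρ ∨ 1 < ‖z‖) ∧ |‖z‖ - ρ|⁻¹ ≤ K ∧ ‖z‖ ≤ K)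
    {y : ℕ → E} {M D : ℝ} (hy : ∀ k, ‖y k‖ ≤ M)
    (hD : ∀ k, ‖aeval (seqShift 𝕜 E) (s.map fun z => X - C z).prod y k‖ ≤ D * ρ ^ k) (k : ℕ) :
    ‖y k‖ ≤ (1 + K) ^ (2 * Multiset.card s) * (M + D) * ρ ^ k := by
  induction s using Multiset.induction_on generalizing y M D k with
  | empty =>
    have hM : 0 ≤ M := (norm_nonneg _).trans (hy 0)
    have := hD k
    simp only [Multiset.map_zero, Multiset.prod_zero, map_one, Module.End.one_apply] at this
    simpa using this.trans (by gcongr; linarith)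
  | cons z s ih =>
    obtain ⟨hz, hzK, hzK'⟩ := hs z (Multiset.mem_cons_self z s)
    have hM : 0 ≤ M := (norm_nonneg _).trans (hy 0)
    have hK : 0 ≤ K := (norm_nonneg z).trans hzK'
    have hD0 : 0 ≤ D := (norm_nonneg _).trans (by simpa using hD 0)
    set w : ℕ → E := fun k => y (k + 1) - z • y k
    have hw : ∀ k, ‖w k‖ ≤ (1 + K) * M := fun k =>
      calc ‖w k‖ ≤ ‖y (k + 1)‖ + ‖z‖ * ‖y k‖ := (norm_sub_le _ _).trans_eq (by rw [norm_smul])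
        _ ≤ M + K * M := by gcongr <;> apply hy
        _ = (1 + K) * M := by ring
    have hyw : aeval (seqShift 𝕜 E) ((z ::ₘ s).map fun z => X - C z).prod y =
        aeval (seqShift 𝕜 E) (s.map fun z => X - C z).prod w := by
      rw [Multiset.map_cons, Multiset.prod_cons, mul_comm, map_mul, Module.End.mul_apply]
      congr 1
      funext k
      exact aeval_seqShift_X_sub_C_apply z y k
    set A := (1 + K) ^ (2 * Multiset.card s)
    have hA : 1 ≤ A := one_le_pow₀ (by linarith)
    have hwdecay := ih (fun z hz => hs z (Multiset.mem_cons_of_mem hz)) hw (hyw ▸ hD)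
    calc ‖y k‖ ≤ (M + A * ((1 + K) * M + D) / |‖z‖ - ρ|) * ρ ^ k :=
          norm_le_of_norm_sub_smul_le hρ0 hρ1 hz hy hwdecay k
      _ ≤ (M + K * (A * ((1 + K) * M + D))) * ρ ^ k := by
          gcongr
          rw [div_eq_inv_mul]
          gcongr
      _ ≤ (1 + K) ^ (2 * Multiset.card (z ::ₘ s)) * (M + D) * ρ ^ k := by
          rw [Multiset.card_cons, Nat.mul_succ, pow_add]
          gcongr
          nlinarith [mul_nonneg hK hM, mul_nonneg (mul_nonneg hK hK) hM, mul_nonneg hK hD0,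
            mul_nonneg (mul_nonneg hK hK) hD0]

end Factorization

section AlgClosed

open Polynomial Filter Topology

variable {𝕜 E : Type*} [NormedField 𝕜] [IsAlgClosed 𝕜] [NormedAddCommGroup E] [NormedSpace 𝕜 E]

theorem exists_decay_of_aeval_seqShift_pow_eq_zero (P : 𝕜[X])
    (hP : ∀ z : 𝕜, ‖z‖ = 1 → ¬ P.IsRoot z) :
    ∃ ρ : ℝ, 0 < ρ ∧ ρ < 1 ∧ ∃ B : ℝ, 1 ≤ B ∧ ∀ (n : ℕ) (y : ℕ → E) (M : ℝ),
      (∀ k, ‖y k‖ ≤ M) → aeval (seqShift 𝕜 E) (P ^ n) y = 0 → ∀ k, ‖y k‖ ≤ B ^ n * M * ρ ^ k := by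
  have hP0 : P ≠ 0 := by rintro rfl; exact hP 1 norm_one (by simp)
  set s := P.roots
  -- `ρ` separates the roots inside the unit disc from the unit circle
  obtain ⟨ρ, ⟨hρ0, hρs⟩, hρ1⟩ : ∃ ρ : ℝ, (0 < ρ ∧ ∀ z ∈ s.toFinset, ‖z‖ < 1 → ‖z‖ < ρ) ∧ ρ < 1 := by
    refine ((Eventually.and ?_ ((eventually_all_finset _).2 fun z _ => ?_)).and
      self_mem_nhdsWithin).exists (f := 𝓝[<] (1 : ℝ))
    · exact eventually_nhdsWithin_of_eventually_nhds (lt_mem_nhds zero_lt_one)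
    · by_cases h : ‖z‖ < 1
      · filter_upwards [eventually_nhdsWithin_of_eventually_nhds (lt_mem_nhds h)] with ρ hρ _
        exact hρ
      · exact Eventually.of_forall fun _ h' => absurd h' h
  have hs : ∀ z ∈ s, ‖z‖ < ρ ∨ 1 < ‖z‖ := by
    intro z hz
    rcases lt_trichotomy ‖z‖ 1 with h | h | h
    · exact .inl (hρs z (Multiset.mem_toFinset.2 hz) h)
    · exact absurd ((mem_roots hP0).1 hz) (hP z h)
    · exact .inr h
  obtain ⟨K, hK⟩ := Finset.exists_le (insert 0 (s.toFinset.image fun z => |‖z‖ - ρ|⁻¹ + ‖z‖))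
  have hK0 : 0 ≤ K := hK 0 (Finset.mem_insert_self _ _)
  have hsK : ∀ z ∈ s, (‖z‖ < ρ ∨ 1 < ‖z‖) ∧ |‖z‖ - ρ|⁻¹ ≤ K ∧ ‖z‖ ≤ K := by
    intro z hz
    have hzK := hK _ <| Finset.mem_insert_of_mem <|
      Finset.mem_image_of_mem _ (Multiset.mem_toFinset.2 hz)
    have : 0 ≤ |‖z‖ - ρ|⁻¹ := by positivity
    exact ⟨hs z hz, by linarith [norm_nonneg z], by linarith⟩
  refine ⟨ρ, hρ0, hρ1, (1 + K) ^ (2 * Multiset.card s), one_le_pow₀ (by linarith),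
    fun n y M hy hPy k => ?_⟩
  have hfac : P ^ n = C (P ^ n).leadingCoeff * ((n • s).map fun z => X - C z).prod := by
    rw [← roots_pow]
    exact (C_leadingCoeff_mul_prod_multiset_X_sub_C IsAlgClosed.card_roots_eq_natDegree).symm
  have hprod : aeval (seqShift 𝕜 E) ((n • s).map fun z => X - C z).prod y = 0 := by
    rw [hfac, map_mul, Module.End.mul_apply, aeval_C, Module.algebraMap_end_apply] at hPy
    exact (smul_eq_zero.1 hPy).resolve_left (leadingCoeff_ne_zero.2 (pow_ne_zero n hP0))
  have := norm_le_of_aeval_seqShift_prod_le hρ0.le hρ1 (n • s)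
    (fun z hz => hsK z (Multiset.mem_of_mem_nsmul hz)) hy (D := 0) (fun k => by simp [hprod]) k
  rw [Multiset.card_nsmul, add_zero] at this
  convert this using 3
  ring

end AlgClosed

theorem Finset.sum_Icc_comp_neg {M : Type*} [AddCommMonoid M] (m n : ℤ) (f : ℤ → M) :
    ∑ ℓ ∈ Finset.Icc (-n) m, f (-ℓ) = ∑ ℓ ∈ Finset.Icc (-m) n, f ℓ :=
  Finset.sum_nbij' Neg.neg Neg.neg (by intro ℓ; simp only [Finset.mem_Icc]; omega)
    (by intro ℓ; simp only [Finset.mem_Icc]; omega) (by simp) (by simp) (by simp)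

section Convolution

open Polynomial

variable {r p : ℕ} {a : ℤ → ℂ}

variable (r p a) in
def convOp : Module.End ℂ (ℤ → ℂ) where
  toFun := convAct r p a
  map_add' u v := by
    funext j
    simp only [convAct, Pi.add_apply, mul_add, Finset.sum_add_distrib]
  map_smul' c u := by
    funext j
    simp only [convAct, Pi.smul_apply, smul_eq_mul, RingHom.id_apply, Finset.mul_sum]
    exact Finset.sum_congr rfl fun ℓ _ => by ring

theorem convOp_apply (u : ℤ → ℂ) (j : ℤ) :
    convOp r p a u j = ∑ ℓ ∈ Finset.Icc (-(r : ℤ)) p, a ℓ * u (j + ℓ) := rfl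

theorem convOp_commute (b : ℤ → ℂ) : Commute (convOp r p a) (convOp r p b) := by
  refine LinearMap.ext fun u => funext fun j => ?_
  simp only [Module.End.mul_apply, convOp_apply, Finset.mul_sum]
  rw [Finset.sum_comm]
  refine Finset.sum_congr rfl fun ℓ _ => Finset.sum_congr rfl fun m _ => ?_
  rw [add_right_comm]
  ring

theorem support_convOp_subset {u : ℤ → ℂ} {lo hi : ℤ} (hu : Function.support u ⊆ Set.Icc lo hi) :
    Function.support (convOp r p a u) ⊆ Set.Icc (lo - p) (hi + r) := by
  intro j hj
  rw [Function.mem_support, convOp_apply] at hj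
  obtain ⟨ℓ, hℓ, hne⟩ := Finset.exists_ne_zero_of_sum_ne_zero hj
  have := hu (right_ne_zero_of_mul hne)
  simp only [Finset.mem_Icc, Set.mem_Icc] at hℓ this ⊢
  omega

theorem support_convOp_pow_subset (n : ℕ) {u : ℤ → ℂ} {lo hi : ℤ}
    (hu : Function.support u ⊆ Set.Icc lo hi) :
    Function.support ((convOp r p a ^ n) u) ⊆ Set.Icc (lo - n * p) (hi + n * r) := by
  induction n with
  | zero => simpa using hu
  | succ n ih =>
    rw [pow_succ', Module.End.mul_apply]
    convert support_convOp_subset ih using 2 <;> push_cast <;> ring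

theorem convOp_pow_comp_neg (n : ℕ) (u : ℤ → ℂ) :
    (convOp p r (fun ℓ => a (-ℓ)) ^ n) (fun j => u (-j)) = fun j => (convOp r p a ^ n) u (-j) := by
  induction n with
  | zero => rfl
  | succ n ih =>
    funext j
    rw [pow_succ', Module.End.mul_apply, ih, pow_succ', Module.End.mul_apply, convOp_apply,
      convOp_apply, ← Finset.sum_Icc_comp_neg]
    simp only [neg_neg, neg_add]

theorem symbol_comp_neg (z : ℂ) :
    symbol p r (fun ℓ => a (-ℓ)) z = symbol r p a z⁻¹ := by
  rw [symbol, symbol, ← Finset.sum_Icc_comp_neg]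
  simp only [neg_neg, zpow_neg, inv_zpow]

variable (r p a) in
/-- `X ^ r * Q̂(X)`: evaluated at the shift of sequences on `ℕ`, it acts as `Q` followed by a
shift by `r` (see `aeval_seqShift_symbolPoly`). -/
def symbolPoly : ℂ[X] :=
  ∑ ℓ ∈ Finset.Icc (-(r : ℤ)) p, monomial (ℓ + r).toNat (a ℓ)

theorem eval_symbolPoly {z : ℂ} (hz : z ≠ 0) : (symbolPoly r p a).eval z = z ^ r * symbol r p a z := by
  simp only [symbolPoly, eval_finsetSum, eval_monomial, symbol, Finset.mul_sum]
  refine Finset.sum_congr rfl fun ℓ hℓ => ?_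
  rw [Finset.mem_Icc] at hℓ
  rw [← zpow_natCast, Int.toNat_of_nonneg (by omega), zpow_add₀ hz, zpow_natCast]
  ring

theorem not_isRoot_symbolPoly (ha : ∀ κ : ℂ, ‖κ‖ = 1 → symbol r p a κ ≠ 0) {z : ℂ} (hz : ‖z‖ = 1) :
    ¬ (symbolPoly r p a).IsRoot z := by
  have hz0 : z ≠ 0 := by rintro rfl; simp at hz
  rw [IsRoot.def, eval_symbolPoly hz0]
  exact mul_ne_zero (pow_ne_zero _ hz0) (ha z hz)

theorem aeval_seqShift_symbolPoly (u : ℤ → ℂ) (J : ℤ) :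
    aeval (seqShift ℂ ℂ) (symbolPoly r p a) (fun k : ℕ => u (k + J)) =
      fun k : ℕ => convOp r p a u (k + (J + r)) := by
  funext k
  simp only [symbolPoly, map_sum, LinearMap.sum_apply, Finset.sum_apply, aeval_monomial,
    Module.End.mul_apply, Module.algebraMap_end_apply, Pi.smul_apply, seqShift_pow_apply,
    smul_eq_mul, convOp_apply]
  refine Finset.sum_congr rfl fun ℓ hℓ => ?_
  rw [Finset.mem_Icc] at hℓ
  push_cast
  rw [Int.toNat_of_nonneg (by omega)]
  ring_nf

theorem aeval_seqShift_symbolPoly_pow (n : ℕ) (u : ℤ → ℂ) (J : ℤ) :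
    aeval (seqShift ℂ ℂ) (symbolPoly r p a ^ n) (fun k : ℕ => u (k + J)) =
      fun k : ℕ => (convOp r p a ^ n) u (k + (J + n * r)) := by
  induction n generalizing J with
  | zero => simp
  | succ n ih =>
    rw [pow_succ', map_mul, Module.End.mul_apply, ih, aeval_seqShift_symbolPoly, pow_succ']
    funext k
    rw [Module.End.mul_apply]
    push_cast
    ring_nf

end Convolution

section Decay

variable {r p : ℕ} {a : ℤ → ℂ}

theorem exists_decay_of_convOp_pow_eq_zero (ha : ∀ κ : ℂ, ‖κ‖ = 1 → symbol r p a κ ≠ 0) :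
    ∃ ρ : ℝ, 0 < ρ ∧ ρ < 1 ∧ ∃ B : ℝ, 1 ≤ B ∧ ∀ (n : ℕ) (u : ℤ → ℂ) (M : ℝ), (∀ j, ‖u j‖ ≤ M) →
      (∀ j : ℤ, n * r < j → (convOp r p a ^ n) u j = 0) →
      ∀ k : ℕ, ‖u (k + 1)‖ ≤ B ^ n * M * ρ ^ k := by
  obtain ⟨ρ, hρ0, hρ1, B, hB, hdecay⟩ :=
    exists_decay_of_aeval_seqShift_pow_eq_zero (E := ℂ) _ fun _ => not_isRoot_symbolPoly ha
  refine ⟨ρ, hρ0, hρ1, B, hB, fun n u M hu hQ => hdecay n _ M (fun k => hu _) ?_⟩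
  rw [aeval_seqShift_symbolPoly_pow]
  funext k
  exact hQ _ (by omega)

theorem exists_decay_of_support_convOp_pow (ha : ∀ κ : ℂ, ‖κ‖ = 1 → symbol r p a κ ≠ 0) :
    ∃ ρ : ℝ, 0 < ρ ∧ ρ < 1 ∧ ∃ B : ℝ, 1 ≤ B ∧ ∀ (n : ℕ) (u : ℤ → ℂ) (M : ℝ), (∀ j, ‖u j‖ ≤ M) →
      Function.support ((convOp r p a ^ n) u) ⊆ Set.Icc (-(n * p : ℤ)) (n * r) →
      ∀ j : ℤ, ‖u j‖ ≤ B ^ n * M * ρ ^ j.natAbs / ρ := by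
  obtain ⟨ρ₁, hρ₁0, hρ₁1, B₁, hB₁, hright⟩ := exists_decay_of_convOp_pow_eq_zero ha
  obtain ⟨ρ₂, hρ₂0, hρ₂1, B₂, hB₂, hleft⟩ :=
    exists_decay_of_convOp_pow_eq_zero (r := p) (p := r) (a := fun ℓ => a (-ℓ)) fun κ hκ => by
      rw [symbol_comp_neg]
      exact ha _ (by rw [norm_inv, hκ, inv_one])
  set ρ := max ρ₁ ρ₂
  set B := max B₁ B₂
  have hρ0 : 0 < ρ := lt_max_of_lt_left hρ₁0
  refine ⟨ρ, hρ0, max_lt hρ₁1 hρ₂1, B, le_max_of_le_left hB₁,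
    fun n u M hu hsupp j => ?_⟩
  have hM : 0 ≤ M := (norm_nonneg _).trans (hu 0)
  have hmono : ∀ {ρ' B' : ℝ} (k : ℕ), 0 ≤ ρ' → ρ' ≤ ρ → 0 ≤ B' → B' ≤ B →
      B' ^ n * M * ρ' ^ k ≤ B ^ n * M * ρ ^ (k + 1) / ρ := by
    intro ρ' B' k hρ'0 hρ' hB'0 hB'
    rw [pow_succ, ← mul_assoc, mul_div_cancel_right₀ _ hρ0.ne']
    gcongr
  obtain rfl | hj := eq_or_ne j 0
  · have hρinv : 1 ≤ ρ⁻¹ := one_le_inv₀ hρ0 |>.2 (max_le hρ₁1.le hρ₂1.le)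
    rw [Int.natAbs_zero, pow_zero, mul_one, div_eq_mul_inv]
    calc ‖u 0‖ ≤ M := hu 0
      _ ≤ B ^ n * M := le_mul_of_one_le_left hM (one_le_pow₀ (le_max_of_le_left hB₁))
      _ ≤ B ^ n * M * ρ⁻¹ := le_mul_of_one_le_right (by positivity) hρinv
  obtain ⟨k, hk⟩ := Nat.exists_eq_succ_of_ne_zero (Int.natAbs_ne_zero.2 hj)
  rw [hk]
  rcases Int.natAbs_eq j with hj' | hj' <;> rw [hj', hk, Nat.cast_succ]
  · have hQ : ∀ j : ℤ, n * r < j → (convOp r p a ^ n) u j = 0 := fun j hj =>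
      Function.notMem_support.1 fun h => by have := (hsupp h).2; omega
    exact (hright n u M hu hQ k).trans
      (hmono k hρ₁0.le (le_max_left _ _) (by linarith) (le_max_left _ _))
  · have hQ : ∀ j : ℤ, n * p < j →
        (convOp p r (fun ℓ => a (-ℓ)) ^ n) (fun j => u (-j)) j = 0 := fun j hj => by
      rw [convOp_pow_comp_neg]
      exact Function.notMem_support.1 fun h => by have := (hsupp h).1; omega
    exact (hleft n _ M (fun j => hu _) hQ k).trans
      (hmono k hρ₂0.le (le_max_right _ _) (by linarith) (le_max_right _ _))

end Decay

theorem convOp_pow_apply_pow {r p : ℕ} {a₀ a₁ : ℤ → ℂ} {T : Seq2 →L[ℂ] Seq2}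
    (hT : ∀ u : Seq2, convOp r p a₁ (T u) = convOp r p a₀ u) (n : ℕ) (u : Seq2) :
    (convOp r p a₁ ^ n) ((T ^ n) u) = (convOp r p a₀ ^ n) u := by
  induction n with
  | zero => rfl
  | succ n ih =>
    rw [pow_succ, Module.End.mul_apply, pow_succ', mul_apply_eq_comp, hT,
      ← Module.End.mul_apply, ((convOp_commute a₀).pow_left n).eq, Module.End.mul_apply, ih,
      ← Module.End.mul_apply, ← pow_succ']

theorem support_dirac : Function.support dirac = {0} := by
  ext j
  simp [dirac, lp.single_apply, Pi.single_apply]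

theorem exists_pow_mul_pow_le_exp {A ρ : ℝ} (hA : 0 ≤ A) (hρ0 : 0 < ρ) (hρ1 : ρ < 1) (Λ₀ : ℝ) :
    ∃ Λ ≥ Λ₀, ∃ c > 0, ∀ n m : ℕ, n * Λ ≤ m → A ^ n * ρ ^ m ≤ Real.exp (-c * m) := by
  set c := -Real.log ρ / 2
  have hc : 0 < c := by have := Real.log_neg hρ0 hρ1; simp only [c]; linarith
  refine ⟨max Λ₀ (Real.log (A + 1) / c), le_max_left _ _, c, hc, fun n m hnm => ?_⟩
  have hlog : n * Real.log (A + 1) ≤ c * m :=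
    calc n * Real.log (A + 1) ≤ n * (max Λ₀ (Real.log (A + 1) / c) * c) := by
          gcongr
          rw [← div_le_iff₀ hc]
          exact le_max_right _ _
      _ ≤ c * m := by nlinarith
  calc A ^ n * ρ ^ m ≤ (A + 1) ^ n * ρ ^ m := by gcongr; linarith
    _ = Real.exp (n * Real.log (A + 1) + m * Real.log ρ) := by
        rw [Real.exp_add, Real.exp_nat_mul, Real.exp_nat_mul, Real.exp_log (by linarith),
          Real.exp_log hρ0]
    _ ≤ Real.exp (-c * m) := by
        gcongr
        have : Real.log ρ = -2 * c := by simp only [c]; ring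
        rw [this]
        linarith

theorem temporal_green_implicit_far_bound_general
    (r p : ℕ) (a0 a1 : ℤ → ℂ)
    (L : Seq2 →L[ℂ] Seq2)
    -- Assumption 1
    (hQ1_ne : ∀ κ : ℂ, ‖κ‖ = 1 → symbol r p a1 κ ≠ 0)
    -- `ℒ = Q₁⁻¹ Q₀` is characterized by `Q₁ ∘ ℒ = Q₀`
    (hL : ∀ (u : Seq2) (j : ℤ),
      convAct r p a1 (fun i => L u i) j = convAct r p a0 (fun i => u i) j)
    : ∃ LL : ℝ, max (p : ℝ) (r : ℝ) ≤ LL ∧ ∃ C > (0 : ℝ), ∃ c > (0 : ℝ),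
      ∀ n : ℕ, 1 ≤ n → ∀ j : ℤ, (n : ℝ) * LL < |(j : ℝ)| →
      ‖((L ^ n) dirac) j‖ ≤ C * Real.exp (-c * |(j : ℝ)|) := by
  obtain ⟨ρ, hρ0, hρ1, B, hB, hdecay⟩ := exists_decay_of_support_convOp_pow hQ1_ne
  obtain ⟨Λ, hΛ, c, hc, hexp⟩ := exists_pow_mul_pow_le_exp
    (mul_nonneg (zero_le_one.trans hB) (norm_nonneg L)) hρ0 hρ1 (max p r)
  refine ⟨Λ, hΛ, ρ⁻¹, inv_pos.2 hρ0, c, hc, fun n hn j hj => ?_⟩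
  have hsupp : Function.support ((convOp r p a1 ^ n) ((L ^ n) dirac)) ⊆
      Set.Icc (-(n * p : ℤ)) (n * r) := by
    rw [convOp_pow_apply_pow (fun u => funext (hL u))]
    simpa using support_convOp_pow_subset n (lo := 0) (hi := 0) (by simp [support_dirac])
  have hbdd : ∀ j, ‖((L ^ n) dirac) j‖ ≤ ‖L‖ ^ n := fun j =>
    calc ‖((L ^ n) dirac) j‖ ≤ ‖(L ^ n) dirac‖ := lp.norm_apply_le_norm two_ne_zero _ j
      _ ≤ ‖L ^ n‖ * ‖dirac‖ := (L ^ n).le_opNorm dirac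
      _ ≤ ‖L‖ ^ n := by
          rw [dirac, lp.norm_single (by norm_num), norm_one, mul_one]
          exact norm_pow_le' L hn
  have hj' : (n : ℝ) * Λ ≤ j.natAbs := by rw [Nat.cast_natAbs, Int.cast_abs]; exact hj.le
  calc ‖((L ^ n) dirac) j‖ ≤ B ^ n * ‖L‖ ^ n * ρ ^ j.natAbs / ρ := hdecay n _ _ hbdd hsupp j
    _ = ρ⁻¹ * ((B * ‖L‖) ^ n * ρ ^ j.natAbs) := by rw [mul_pow]; ring
    _ ≤ ρ⁻¹ * Real.exp (-c * |(j : ℝ)|) := by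
        gcongr
        simpa [Nat.cast_natAbs] using hexp n j.natAbs hj'

/-- Lemma 10: in the implicit case with `K = 1`, there is `L ≥ max(p, r)` such that for
`|j| > nL` the temporal Green's function satisfies `|𝒢ⁿ_j| ≤ C e^{-c|j|}`. -/
theorem temporal_green_implicit_far_bound
    (r p : ℕ) (hrp : 1 ≤ p + r) (a0 a1 : ℤ → ℂ)
    (α β : ℝ) (μ : ℕ) (hα : 0 < α) (hβ : 0 < β) (hμ : 1 ≤ μ)
    (L : Seq2 →L[ℂ] Seq2)
    -- Assumption 1
    (hQ1_ne : ∀ κ : ℂ, ‖κ‖ = 1 → symbol r p a1 κ ≠ 0)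
    (hQ1_index : (2 * (Real.pi : ℂ) * Complex.I)⁻¹ *
      (∮ κ in C(0, 1), deriv (symbol r p a1) κ / symbol r p a1 κ) = 0)
    -- `ℒ = Q₁⁻¹ Q₀` is characterized by `Q₁ ∘ ℒ = Q₀`
    (hL : ∀ (u : Seq2) (j : ℤ),
      convAct r p a1 (fun i => L u i) j = convAct r p a0 (fun i => u i) j)
    -- implicit case: `Q₁` is not the identity, so `a_{-r,1} ≠ 0` and `a_{p,1} ≠ 0`
    (hnotid : ¬ ∀ ℓ ∈ Finset.Icc (-(r : ℤ)) (p : ℤ), a1 ℓ = if ℓ = 0 then 1 else 0)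
    (har : a1 (-(r : ℤ)) ≠ 0) (hap : a1 (p : ℤ) ≠ 0)
    -- Assumption 2 specialized to `K = 1`, `κ̲₁ = 1`, `z̲₁ = F(1) = 1`
    (hF1 : Fsym r p a0 a1 1 = 1)
    (hFlt : ∀ κ : ℂ, ‖κ‖ = 1 → κ ≠ 1 → ‖Fsym r p a0 a1 κ‖ < 1)
    (hexp : ∃ g : ℝ → ℂ, (g =O[nhds 0] fun ξ : ℝ => ξ ^ (2 * μ + 1)) ∧
      ∀ᶠ ξ : ℝ in nhds 0, Fsym r p a0 a1 (Complex.exp (Complex.I * ξ)) =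
        Complex.exp (-(Complex.I) * (α : ℂ) * (ξ : ℂ)
          - (β : ℂ) * (ξ : ℂ) ^ (2 * μ) + g ξ))
    -- Assumption 3
    (hA : ∀ z : ℂ, 1 ≤ ‖z‖ → Acoef a0 a1 (-(r : ℤ)) z ≠ 0 ∧ Acoef a0 a1 (p : ℤ) z ≠ 0)
    : ∃ LL : ℝ, max (p : ℝ) (r : ℝ) ≤ LL ∧ ∃ C > (0 : ℝ), ∃ c > (0 : ℝ),
      ∀ n : ℕ, 1 ≤ n → ∀ j : ℤ, (n : ℝ) * LL < |(j : ℝ)| →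
      ‖((L ^ n) dirac) j‖ ≤ C * Real.exp (-c * |(j : ℝ)|) :=
  temporal_green_implicit_far_bound_general r p a0 a1 L hQ1_ne hL
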